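/- arXiv:1809.07226 — 5 statements merged into one kernel-verified Lean document; each statement's English description precedes it below -/
import Mathlib

section
/- Let d ≥ 1 be an integer, α > 0, β ∈ (0,1). Suppose p : (0,∞) × ℝ^d → [0,∞) is measurable and satisfies (i) the Chapman–Kolmogorov identity ∫_{ℝ^d} p(s, x−y) p(t, y) dy = p(s+t, x) for all s,t > 0 and x ∈ ℝ^d, and (ii) the two-sided bound c₁·min(t^{-d/α}, t/|x|^{d+α}) ≤ p(t,x) ≤ c₂·min(t^{-d/α}, t/|x|^{d+α}) for all t > 0, x ∈ ℝ^d, with constants 0 < c₁ ≤ c₂. Suppose G : (0,∞) × ℝ^d → [0,∞) satisfies c₃·p(t^β, x) ≤ G(t,x) ≤ c₄·p(t^β, x) for all t > 0, x ∈ ℝ^d, with constants 0 < c₃ ≤ c₄. Then there is a constant C such that for all s,t > 0 and x,z ∈ ℝ^d, ∫_{ℝ^d} G(s, x−y) G(t, y−z) dy ≤ C · G(s+t, x−z). -/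
open MeasureTheory ENNReal

/-- Section 5, semigroup-type inequality for the subordinated
kernel. If `p` satisfies Chapman–Kolmogorov and the two-sided stable bound, and
`G ≍ p(t^β, ·)`, then `∫ G(s, x-y) G(t, y-z) dy ≤ C G(s+t, x-z)`. -/
theorem subordinated_semigroup_inequality
    (d : ℕ) (hd : 1 ≤ d) (α β : ℝ)
    (hα : 0 < α) (hβ : β ∈ Set.Ioo (0 : ℝ) 1)
    (p : ℝ → EuclideanSpace ℝ (Fin d) → ℝ)
    (hpmeas : Measurable (Function.uncurry p))
    (hpnonneg : ∀ t x, 0 ≤ p t x)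
    (hCK : ∀ s t : ℝ, 0 < s → 0 < t → ∀ x : EuclideanSpace ℝ (Fin d),
      (∫⁻ y, ENNReal.ofReal (p s (x - y)) * ENNReal.ofReal (p t y))
        = ENNReal.ofReal (p (s + t) x))
    (c₁ c₂ : ℝ) (hc₁ : 0 < c₁) (hc₁₂ : c₁ ≤ c₂)
    (hpbound : ∀ t : ℝ, 0 < t → ∀ x : EuclideanSpace ℝ (Fin d),
      c₁ * min (t ^ (-(d : ℝ) / α)) (t / ‖x‖ ^ ((d : ℝ) + α)) ≤ p t x ∧
      p t x ≤ c₂ * min (t ^ (-(d : ℝ) / α)) (t / ‖x‖ ^ ((d : ℝ) + α)))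
    (G : ℝ → EuclideanSpace ℝ (Fin d) → ℝ)
    (hGnonneg : ∀ t x, 0 ≤ G t x)
    (c₃ c₄ : ℝ) (hc₃ : 0 < c₃) (hc₃₄ : c₃ ≤ c₄)
    (hGcomp : ∀ t : ℝ, 0 < t → ∀ x : EuclideanSpace ℝ (Fin d),
      c₃ * p (t ^ β) x ≤ G t x ∧ G t x ≤ c₄ * p (t ^ β) x) :
    ∃ C : ℝ, 0 < C ∧
      ∀ s t : ℝ, 0 < s → 0 < t → ∀ x z : EuclideanSpace ℝ (Fin d),
        (∫⁻ y, ENNReal.ofReal (G s (x - y)) * ENNReal.ofReal (G t (y - z)))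
          ≤ ENNReal.ofReal (C * G (s + t) (x - z)) := by
  obtain ⟨hβ0, hβ1⟩ := hβ
  have hc₂ : 0 < c₂ := lt_of_lt_of_le hc₁ hc₁₂
  have hc₄ : 0 < c₄ := lt_of_lt_of_le hc₃ hc₃₄
  refine ⟨2 * c₂ * c₄ * c₄ / (c₁ * c₃), by positivity, ?_⟩
  intro s t hs ht x z
  have hsβ : 0 < s ^ β := Real.rpow_pos_of_pos hs β
  have htβ : 0 < t ^ β := Real.rpow_pos_of_pos ht β
  have hst : 0 < s + t := by linarith
  have huv : (s + t) ^ β ≤ s ^ β + t ^ β := by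
    have h := NNReal.rpow_add_le_add_rpow s.toNNReal t.toNNReal hβ0.le hβ1.le
    have h' := (NNReal.coe_le_coe).2 h
    rwa [NNReal.coe_add, NNReal.coe_rpow, NNReal.coe_rpow, NNReal.coe_rpow,
      ← Real.toNNReal_add hs.le ht.le, Real.coe_toNNReal _ hs.le,
      Real.coe_toNNReal _ ht.le, Real.coe_toNNReal _ hst.le] at h'
  have hv2u : s ^ β + t ^ β ≤ 2 * (s + t) ^ β := by
    have h1 : s ^ β ≤ (s + t) ^ β := Real.rpow_le_rpow hs.le (by linarith) hβ0.le
    have h2 : t ^ β ≤ (s + t) ^ β := Real.rpow_le_rpow ht.le (by linarith) hβ0.le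
    linarith
  have hu : 0 < (s + t) ^ β := Real.rpow_pos_of_pos hst β
  have hv : 0 < s ^ β + t ^ β := by linarith
  set w := x - z with hw
  -- comparability of p at s^β + t^β and (s+t)^β
  have hpcomp : p (s ^ β + t ^ β) w ≤ (2 * c₂ / c₁) * p ((s + t) ^ β) w := by
    have h1 := (hpbound _ hv w).2
    have h2 := (hpbound _ hu w).1
    set e : ℝ := -(d : ℝ) / α
    set r : ℝ := ‖w‖ ^ ((d : ℝ) + α)
    have hr : 0 ≤ r := Real.rpow_nonneg (norm_nonneg _) _
    have hminnn : 0 ≤ min (((s + t) ^ β) ^ e) (((s + t) ^ β) / r) :=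
      le_min (Real.rpow_nonneg hu.le _) (div_nonneg hu.le hr)
    have key : min ((s ^ β + t ^ β) ^ e) ((s ^ β + t ^ β) / r)
        ≤ 2 * min (((s + t) ^ β) ^ e) (((s + t) ^ β) / r) := by
      have ha : (s ^ β + t ^ β) ^ e ≤ ((s + t) ^ β) ^ e :=
        Real.rpow_le_rpow_of_nonpos hu huv
          (div_nonpos_iff.mpr (Or.inr ⟨neg_nonpos.mpr (by positivity), hα.le⟩))
      have hb : (s ^ β + t ^ β) / r ≤ 2 * (((s + t) ^ β) / r) := by
        rw [div_eq_mul_inv, div_eq_mul_inv, ← mul_assoc]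
        exact mul_le_mul_of_nonneg_right hv2u (by positivity)
      calc min ((s ^ β + t ^ β) ^ e) ((s ^ β + t ^ β) / r)
          ≤ min (((s + t) ^ β) ^ e) (2 * (((s + t) ^ β) / r)) := min_le_min ha hb
        _ ≤ min (2 * (((s + t) ^ β) ^ e)) (2 * (((s + t) ^ β) / r)) := by
            refine min_le_min ?_ le_rfl
            nlinarith [Real.rpow_nonneg hu.le e]
        _ = 2 * min (((s + t) ^ β) ^ e) (((s + t) ^ β) / r) := by
            rw [mul_min_of_nonneg _ _ (by norm_num : (0:ℝ) ≤ 2)]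
    calc p (s ^ β + t ^ β) w ≤ c₂ * min ((s ^ β + t ^ β) ^ e) ((s ^ β + t ^ β) / r) := h1
      _ ≤ c₂ * (2 * min (((s + t) ^ β) ^ e) (((s + t) ^ β) / r)) :=
          mul_le_mul_of_nonneg_left key hc₂.le
      _ = (2 * c₂ / c₁) * (c₁ * min (((s + t) ^ β) ^ e) (((s + t) ^ β) / r)) := by
          field_simp
      _ ≤ (2 * c₂ / c₁) * p ((s + t) ^ β) w :=
          mul_le_mul_of_nonneg_left h2 (by positivity)
  have hGlow := (hGcomp (s + t) hst w).1
  -- final real inequality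
  have hreal : c₄ * c₄ * p (s ^ β + t ^ β) w
      ≤ (2 * c₂ * c₄ * c₄ / (c₁ * c₃)) * G (s + t) w := by
    have h3 : c₃ * p ((s + t) ^ β) w ≤ G (s + t) w := hGlow
    have hpn : 0 ≤ p ((s + t) ^ β) w := hpnonneg _ _
    calc c₄ * c₄ * p (s ^ β + t ^ β) w
        ≤ c₄ * c₄ * ((2 * c₂ / c₁) * p ((s + t) ^ β) w) :=
          mul_le_mul_of_nonneg_left hpcomp (by positivity)
      _ = (2 * c₂ * c₄ * c₄ / (c₁ * c₃)) * (c₃ * p ((s + t) ^ β) w) := by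
          field_simp
      _ ≤ _ := mul_le_mul_of_nonneg_left h3 (by positivity)
  -- step 1: bound integral by p integral
  calc (∫⁻ y, ENNReal.ofReal (G s (x - y)) * ENNReal.ofReal (G t (y - z)))
      ≤ ∫⁻ y, ENNReal.ofReal c₄ * ENNReal.ofReal c₄ *
          (ENNReal.ofReal (p (s ^ β) (x - y)) * ENNReal.ofReal (p (t ^ β) (y - z))) := by
        refine lintegral_mono fun y => ?_
        calc ENNReal.ofReal (G s (x - y)) * ENNReal.ofReal (G t (y - z))
            ≤ ENNReal.ofReal (c₄ * p (s ^ β) (x - y)) *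
                ENNReal.ofReal (c₄ * p (t ^ β) (y - z)) := by
              gcongr
              · exact (hGcomp s hs _).2
              · exact (hGcomp t ht _).2
          _ = _ := by
              rw [ENNReal.ofReal_mul hc₄.le, ENNReal.ofReal_mul hc₄.le]; ring
    _ = ENNReal.ofReal c₄ * ENNReal.ofReal c₄ *
          ∫⁻ y, ENNReal.ofReal (p (s ^ β) (x - y)) * ENNReal.ofReal (p (t ^ β) (y - z)) :=
        lintegral_const_mul' _ _ (by finiteness)
    _ = ENNReal.ofReal c₄ * ENNReal.ofReal c₄ *
          ENNReal.ofReal (p (s ^ β + t ^ β) w) := by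
        congr 1
        have htr := lintegral_add_right_eq_self (μ := volume)
          (fun y => ENNReal.ofReal (p (s ^ β) (x - y)) * ENNReal.ofReal (p (t ^ β) (y - z))) z
        calc (∫⁻ y, ENNReal.ofReal (p (s ^ β) (x - y)) * ENNReal.ofReal (p (t ^ β) (y - z)))
            = ∫⁻ y, ENNReal.ofReal (p (s ^ β) (x - (y + z))) *
                ENNReal.ofReal (p (t ^ β) (y + z - z)) := htr.symm
          _ = ∫⁻ y, ENNReal.ofReal (p (s ^ β) (w - y)) * ENNReal.ofReal (p (t ^ β) y) := by
              refine lintegral_congr fun y => ?_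
              have e1 : x - (y + z) = w - y := by rw [hw]; abel
              have e2 : y + z - z = y := by abel
              rw [e1, e2]
          _ = ENNReal.ofReal (p (s ^ β + t ^ β) w) := hCK _ _ hsβ htβ w
    _ ≤ ENNReal.ofReal (2 * c₂ * c₄ * c₄ / (c₁ * c₃) * G (s + t) w) := by
        rw [← ENNReal.ofReal_mul hc₄.le, ← ENNReal.ofReal_mul (by positivity)]
        exact ENNReal.ofReal_le_ofReal hreal
end

section
/- Assume the semigroup-type inequality (i), the on-diagonal bound (ii), η > α/(βd) and γ > 0. Then there is a constant C (depending only on C₀, c₂, η, γ, β, d, α) such that for all t > 0 and x ∈ ℝ^d, ∫₀^t ∫_{ℝ^d} G(t−s, x−y) G(s+γ, y)^{1+η} dy ds ≤ C · G(t+γ, x). -/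
open MeasureTheory ENNReal

/-- Proposition 5.2. Under the semigroup-type inequality and the
on-diagonal bound, for `η > α/(βd)` and `γ > 0`,
`∫₀^t ∫ G(t-s, x-y) G(s+γ, y)^{1+η} dy ds ≤ C G(t+γ, x)`. -/
theorem nonlinear_kernel_integral_bound
    (d : ℕ) (hd : 1 ≤ d) (α β η γ : ℝ)
    (hα : α ∈ Set.Ioo (0 : ℝ) 2) (hβ : β ∈ Set.Ioo (0 : ℝ) 1)
    (hη : α / (β * d) < η) (hγ : 0 < γ)
    (G : ℝ → EuclideanSpace ℝ (Fin d) → ℝ)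
    (hGmeas : Measurable (Function.uncurry G))
    (hGnonneg : ∀ t x, 0 ≤ G t x)
    (C₀ : ℝ) (hC₀ : 0 < C₀)
    (hGsemi : ∀ a b : ℝ, 0 < a → 0 < b → ∀ x : EuclideanSpace ℝ (Fin d),
      (∫⁻ y, ENNReal.ofReal (G a (x - y)) * ENNReal.ofReal (G b y))
        ≤ ENNReal.ofReal (C₀ * G (a + b) x))
    (c₂ : ℝ) (hc₂ : 0 < c₂)
    (hGdiag : ∀ t : ℝ, 0 < t → ∀ x : EuclideanSpace ℝ (Fin d),
      G t x ≤ c₂ * t ^ (-(β * d) / α)) :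
    ∃ C : ℝ, 0 < C ∧
      ∀ t : ℝ, 0 < t → ∀ x : EuclideanSpace ℝ (Fin d),
        (∫⁻ s in Set.Ioo (0 : ℝ) t,
            ∫⁻ y, ENNReal.ofReal (G (t - s) (x - y))
              * ENNReal.ofReal (G (s + γ) y) ^ (1 + η))
          ≤ ENNReal.ofReal (C * G (t + γ) x) := by
  obtain ⟨hα0, hα2⟩ := hα
  obtain ⟨hβ0, hβ1⟩ := hβ
  have hd0 : (0:ℝ) < d := by exact_mod_cast Nat.lt_of_lt_of_le Nat.zero_lt_one hd
  have hβd : 0 < β * d := by positivity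
  have hη0 : 0 < η := lt_trans (by positivity) hη
  set q : ℝ := -(β * d) / α with hq
  set p : ℝ := q * η with hp
  have hp1 : p < -1 := by
    have hηβ : α < η * (β * d) := (div_lt_iff₀ hβd).mp hη
    rw [hp, hq, div_mul_eq_mul_div, div_lt_iff₀ hα0]
    nlinarith
  have hInt : IntegrableOn (fun u : ℝ => u ^ p) (Set.Ioi γ) :=
    integrableOn_Ioi_rpow_of_lt hp1 hγ
  set M : ℝ := ∫ u in Set.Ioi γ, u ^ p with hM
  have hM0 : 0 ≤ M := setIntegral_nonneg measurableSet_Ioi fun u hu =>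
    Real.rpow_nonneg (le_of_lt (lt_trans hγ hu)) _
  have hlintM : (∫⁻ u in Set.Ioi γ, ENNReal.ofReal (u ^ p)) = ENNReal.ofReal M := by
    rw [hM, ofReal_integral_eq_lintegral_ofReal hInt]
    filter_upwards [ae_restrict_mem measurableSet_Ioi] with u hu
    exact Real.rpow_nonneg (le_of_lt (lt_trans hγ hu)) _
  refine ⟨C₀ * c₂ ^ η * (M + 1), by positivity, ?_⟩
  intro t ht x
  -- pointwise bound on the inner integral
  have key : ∀ s ∈ Set.Ioo (0:ℝ) t,
      (∫⁻ y, ENNReal.ofReal (G (t - s) (x - y))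
          * ENNReal.ofReal (G (s + γ) y) ^ (1 + η))
      ≤ ENNReal.ofReal ((s + γ) ^ p)
          * (ENNReal.ofReal (c₂ ^ η) * ENNReal.ofReal (C₀ * G (t + γ) x)) := by
    intro s hs
    have hs0 := hs.1
    have hst := hs.2
    have hsγ : 0 < s + γ := by linarith
    have hbound : ∀ y, ENNReal.ofReal (G (s + γ) y) ^ (1 + η)
        ≤ ENNReal.ofReal (c₂ ^ η * (s + γ) ^ p) * ENNReal.ofReal (G (s + γ) y) := by
      intro y
      rw [ENNReal.rpow_add_of_nonneg _ _ zero_le_one (le_of_lt hη0),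
        ENNReal.rpow_one, mul_comm]
      refine mul_le_mul_left ?_ _
      calc ENNReal.ofReal (G (s + γ) y) ^ η
          ≤ ENNReal.ofReal (c₂ * (s + γ) ^ q) ^ η := by
            exact ENNReal.rpow_le_rpow (ENNReal.ofReal_le_ofReal
              (hGdiag (s + γ) hsγ y)) (le_of_lt hη0)
        _ = ENNReal.ofReal ((c₂ * (s + γ) ^ q) ^ η) := by
            rw [ENNReal.ofReal_rpow_of_nonneg (by positivity) (le_of_lt hη0)]
        _ = ENNReal.ofReal (c₂ ^ η * (s + γ) ^ p) := by
            rw [Real.mul_rpow (le_of_lt hc₂) (Real.rpow_nonneg (le_of_lt hsγ) _),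
              ← Real.rpow_mul (le_of_lt hsγ)]
    calc (∫⁻ y, ENNReal.ofReal (G (t - s) (x - y))
            * ENNReal.ofReal (G (s + γ) y) ^ (1 + η))
        ≤ ∫⁻ y, ENNReal.ofReal (c₂ ^ η * (s + γ) ^ p)
            * (ENNReal.ofReal (G (t - s) (x - y)) * ENNReal.ofReal (G (s + γ) y)) := by
          refine lintegral_mono fun y => ?_
          rw [mul_comm (ENNReal.ofReal (c₂ ^ η * (s + γ) ^ p)), mul_assoc]
          exact mul_le_mul_right (le_trans (hbound y) (le_of_eq (mul_comm _ _))) _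
      _ = ENNReal.ofReal (c₂ ^ η * (s + γ) ^ p)
            * ∫⁻ y, ENNReal.ofReal (G (t - s) (x - y)) * ENNReal.ofReal (G (s + γ) y) :=
          lintegral_const_mul' _ _ ENNReal.ofReal_ne_top
      _ ≤ ENNReal.ofReal (c₂ ^ η * (s + γ) ^ p) * ENNReal.ofReal (C₀ * G (t + γ) x) := by
          refine mul_le_mul_right ?_ _
          have := hGsemi (t - s) (s + γ) (by linarith) hsγ x
          rwa [show t - s + (s + γ) = t + γ by ring] at this
      _ = ENNReal.ofReal ((s + γ) ^ p)
            * (ENNReal.ofReal (c₂ ^ η) * ENNReal.ofReal (C₀ * G (t + γ) x)) := by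
          rw [ENNReal.ofReal_mul (by positivity)]
          ring
  -- integrate in s
  have step1 : (∫⁻ s in Set.Ioo (0 : ℝ) t,
        ∫⁻ y, ENNReal.ofReal (G (t - s) (x - y))
          * ENNReal.ofReal (G (s + γ) y) ^ (1 + η))
      ≤ (∫⁻ s in Set.Ioo (0 : ℝ) t, ENNReal.ofReal ((s + γ) ^ p))
          * (ENNReal.ofReal (c₂ ^ η) * ENNReal.ofReal (C₀ * G (t + γ) x)) := by
    rw [← lintegral_mul_const' _ _ (by finiteness)]
    exact setLIntegral_mono_ae (by fun_prop)
      (Filter.Eventually.of_forall key)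
  -- change of variables in the s-integral
  have step2 : (∫⁻ s in Set.Ioo (0 : ℝ) t, ENNReal.ofReal ((s + γ) ^ p))
      ≤ ENNReal.ofReal M := by
    have hmp : MeasurePreserving (fun s : ℝ => s + γ) volume volume :=
      measurePreserving_add_right volume γ
    have hemb : MeasurableEmbedding (fun s : ℝ => s + γ) :=
      (MeasurableEquiv.addRight γ).measurableEmbedding
    have := hmp.setLIntegral_comp_emb hemb
      (fun u => ENNReal.ofReal (u ^ p)) (Set.Ioo (0:ℝ) t)
    rw [this, Set.image_add_const_Ioo, ← hlintM, zero_add]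
    exact lintegral_mono_set (Set.Ioo_subset_Ioi_self)
  refine le_trans step1 ?_
  refine le_trans (mul_le_mul_left step2 _) ?_
  rw [← ENNReal.ofReal_mul (by positivity : (0:ℝ) ≤ c₂ ^ η), ← ENNReal.ofReal_mul hM0]
  refine ENNReal.ofReal_le_ofReal ?_
  have hG0 := hGnonneg (t + γ) x
  nlinarith [mul_nonneg (mul_nonneg (Real.rpow_nonneg hc₂.le η) hC₀.le) hG0]
end

section
/- Assume the semigroup-type inequality (i), the on-diagonal bound (ii), η > α/(βd) and γ > 0. Then there is a constant C such that for every L ≥ 0 and every measurable V : (0,∞) × ℝ^d → [0,∞) with V(t,x) ≤ L·G(t+γ, x) for all t > 0 and x ∈ ℝ^d, one has (AV)(t,x) ≤ C·L^{1+η}·G(t+γ, x) for all t > 0 and x ∈ ℝ^d. -/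
open MeasureTheory ENNReal

lemma shift_lintegral_rpow (p γ : ℝ) :
    ∫⁻ s in Set.Ioi (0:ℝ), ENNReal.ofReal ((s+γ)^p) = ∫⁻ u in Set.Ioi γ, ENNReal.ofReal (u^p) := by
  rw [← lintegral_indicator measurableSet_Ioi, ← lintegral_indicator measurableSet_Ioi,
    ← lintegral_add_right_eq_self
      (fun u => Set.indicator (Set.Ioi γ) (fun u => ENNReal.ofReal (u^p)) u) γ]
  congr 1
  ext s
  by_cases hs : (0:ℝ) < s
  · simp [Set.indicator_apply, hs, lt_add_iff_pos_left]
  · simp [Set.indicator_apply, hs, lt_add_iff_pos_left]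

/-- Proposition 5.3. Under the semigroup-type inequality and the
on-diagonal bound, if `V(t,x) ≤ L G(t+γ, x)` then
`(AV)(t,x) ≤ C L^{1+η} G(t+γ, x)`. -/
theorem duhamel_comparison_bound
    (d : ℕ) (hd : 1 ≤ d) (α β η γ : ℝ)
    (hα : α ∈ Set.Ioo (0 : ℝ) 2) (hβ : β ∈ Set.Ioo (0 : ℝ) 1)
    (hη : α / (β * d) < η) (hγ : 0 < γ)
    (G : ℝ → EuclideanSpace ℝ (Fin d) → ℝ)
    (hGmeas : Measurable (Function.uncurry G))
    (hGnonneg : ∀ t x, 0 ≤ G t x)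
    (C₀ : ℝ) (hC₀ : 0 < C₀)
    (hGsemi : ∀ a b : ℝ, 0 < a → 0 < b → ∀ x : EuclideanSpace ℝ (Fin d),
      (∫⁻ y, ENNReal.ofReal (G a (x - y)) * ENNReal.ofReal (G b y))
        ≤ ENNReal.ofReal (C₀ * G (a + b) x))
    (c₂ : ℝ) (hc₂ : 0 < c₂)
    (hGdiag : ∀ t : ℝ, 0 < t → ∀ x : EuclideanSpace ℝ (Fin d),
      G t x ≤ c₂ * t ^ (-(β * d) / α)) :
    ∃ C : ℝ, 0 < C ∧
      ∀ L : ℝ, 0 ≤ L →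
        ∀ V : ℝ → EuclideanSpace ℝ (Fin d) → ℝ,
          Measurable (Function.uncurry V) → (∀ t x, 0 ≤ V t x) →
          (∀ t : ℝ, 0 < t → ∀ x, V t x ≤ L * G (t + γ) x) →
          ∀ t : ℝ, 0 < t → ∀ x : EuclideanSpace ℝ (Fin d),
            (∫⁻ s in Set.Ioo (0 : ℝ) t,
                ∫⁻ y, ENNReal.ofReal (G (t - s) (x - y))
                  * ENNReal.ofReal (V s y) ^ (1 + η))
              ≤ ENNReal.ofReal (C * L ^ (1 + η) * G (t + γ) x) := by
  obtain ⟨hα0, hα2⟩ := hα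
  obtain ⟨hβ0, hβ1⟩ := hβ
  have hd0 : (0:ℝ) < d := by exact_mod_cast Nat.lt_of_lt_of_le Nat.zero_lt_one hd
  have hβd : (0:ℝ) < β * d := mul_pos hβ0 hd0
  have hη0 : 0 < η := lt_trans (div_pos hα0 hβd) hη
  have h1η : (0:ℝ) < 1 + η := by linarith
  set p : ℝ := β * d * η / α with hp_def
  have hp1 : 1 < p := by
    rw [hp_def, lt_div_iff₀ hα0, one_mul]
    calc α = (α / (β * d)) * (β * d) := by field_simp
    _ < η * (β * d) := by
        exact mul_lt_mul_of_pos_right hη hβd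
    _ = β * d * η := by ring
  set a : ℝ := -(β * d) / α with ha_def
  have haη : a * η = -p := by rw [ha_def, hp_def]; ring
  -- the integral constant
  set I : ℝ := -γ ^ (-p + 1) / (-p + 1) with hI_def
  have hIval : ∫ u in Set.Ioi γ, u ^ (-p) = I := integral_Ioi_rpow_of_lt (by linarith) hγ
  have hIpos : 0 < I := by
    rw [hI_def]
    have h1 : (0:ℝ) < γ ^ (-p + 1) := Real.rpow_pos_of_pos hγ _
    have h2 : -p + 1 < 0 := by linarith
    have h3 : γ ^ (-p + 1) / (-p + 1) < 0 := div_neg_of_pos_of_neg h1 h2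
    rw [neg_div]
    linarith
  refine ⟨C₀ * c₂ ^ η * I, by positivity, ?_⟩
  intro L hL V hVmeas hVnonneg hVle t ht x
  -- the ENNReal constant
  set c : ℝ≥0∞ := ENNReal.ofReal (C₀ * G (t+γ) x) * ENNReal.ofReal L ^ (1+η)
      * ENNReal.ofReal c₂ ^ η with hc_def
  have hc_ne : c ≠ ∞ := by
    refine ENNReal.mul_ne_top (ENNReal.mul_ne_top ENNReal.ofReal_ne_top ?_) ?_
    · exact ENNReal.rpow_ne_top_of_nonneg h1η.le ENNReal.ofReal_ne_top
    · exact ENNReal.rpow_ne_top_of_nonneg hη0.le ENNReal.ofReal_ne_top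
  have step1 : (∫⁻ s in Set.Ioo (0 : ℝ) t,
      ∫⁻ y, ENNReal.ofReal (G (t - s) (x - y)) * ENNReal.ofReal (V s y) ^ (1 + η))
      ≤ ∫⁻ s in Set.Ioo (0:ℝ) t, c * ENNReal.ofReal ((s+γ) ^ (-p)) := by
    refine setLIntegral_mono' measurableSet_Ioo ?_
    intro s hs
    obtain ⟨hs0, hst⟩ := hs
    have hts : 0 < t - s := by linarith
    have hsγ : 0 < s + γ := by linarith
    have key : ∀ y, ENNReal.ofReal (V s y) ^ (1+η)
        ≤ (ENNReal.ofReal L ^ (1+η) * ENNReal.ofReal (c₂ * (s+γ) ^ a) ^ η)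
          * ENNReal.ofReal (G (s+γ) y) := by
      intro y
      calc ENNReal.ofReal (V s y) ^ (1+η)
          ≤ ENNReal.ofReal (L * G (s+γ) y) ^ (1+η) :=
            ENNReal.rpow_le_rpow (ENNReal.ofReal_le_ofReal (hVle s hs0 y)) h1η.le
        _ = ENNReal.ofReal L ^ (1+η) * ENNReal.ofReal (G (s+γ) y) ^ (1+η) := by
            rw [ENNReal.ofReal_mul hL, ENNReal.mul_rpow_of_nonneg _ _ h1η.le]
        _ = ENNReal.ofReal L ^ (1+η)
            * (ENNReal.ofReal (G (s+γ) y) ^ η * ENNReal.ofReal (G (s+γ) y) ^ (1:ℝ)) := by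
            rw [← ENNReal.rpow_add_of_nonneg _ _ hη0.le zero_le_one, add_comm η 1]
        _ ≤ ENNReal.ofReal L ^ (1+η)
            * (ENNReal.ofReal (c₂ * (s+γ) ^ a) ^ η * ENNReal.ofReal (G (s+γ) y) ^ (1:ℝ)) := by
            gcongr
            exact hGdiag (s+γ) hsγ y
        _ = (ENNReal.ofReal L ^ (1+η) * ENNReal.ofReal (c₂ * (s+γ) ^ a) ^ η)
            * ENNReal.ofReal (G (s+γ) y) := by
            rw [ENNReal.rpow_one]; ring
    set k : ℝ≥0∞ := ENNReal.ofReal L ^ (1+η) * ENNReal.ofReal (c₂ * (s+γ) ^ a) ^ η with hk_def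
    have hk_ne : k ≠ ∞ := ENNReal.mul_ne_top
      (ENNReal.rpow_ne_top_of_nonneg h1η.le ENNReal.ofReal_ne_top)
      (ENNReal.rpow_ne_top_of_nonneg hη0.le ENNReal.ofReal_ne_top)
    calc (∫⁻ y, ENNReal.ofReal (G (t - s) (x - y)) * ENNReal.ofReal (V s y) ^ (1 + η))
        ≤ ∫⁻ y, k * (ENNReal.ofReal (G (t - s) (x - y)) * ENNReal.ofReal (G (s+γ) y)) := by
          refine lintegral_mono fun y => ?_
          calc ENNReal.ofReal (G (t - s) (x - y)) * ENNReal.ofReal (V s y) ^ (1 + η)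
              ≤ ENNReal.ofReal (G (t - s) (x - y)) * (k * ENNReal.ofReal (G (s+γ) y)) :=
                mul_le_mul_right (key y) _
            _ = k * (ENNReal.ofReal (G (t - s) (x - y)) * ENNReal.ofReal (G (s+γ) y)) := by ring
      _ = k * ∫⁻ y, ENNReal.ofReal (G (t - s) (x - y)) * ENNReal.ofReal (G (s+γ) y) :=
          lintegral_const_mul' _ _ hk_ne
      _ ≤ k * ENNReal.ofReal (C₀ * G ((t-s) + (s+γ)) x) :=
          mul_le_mul_right (hGsemi (t-s) (s+γ) hts hsγ x) _
      _ = c * ENNReal.ofReal ((s+γ) ^ (-p)) := by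
          have h1 : (t - s) + (s + γ) = t + γ := by ring
          have h2 : ENNReal.ofReal (c₂ * (s+γ) ^ a) ^ η
              = ENNReal.ofReal c₂ ^ η * ENNReal.ofReal ((s+γ) ^ (-p)) := by
            have h3 : ((s+γ) ^ a) ^ η = (s+γ) ^ (-p) := by
              rw [← Real.rpow_mul hsγ.le, haη]
            rw [ENNReal.ofReal_mul hc₂.le, ENNReal.mul_rpow_of_nonneg _ _ hη0.le,
              ENNReal.ofReal_rpow_of_nonneg (Real.rpow_nonneg hsγ.le _) hη0.le, h3]
          rw [hk_def, h1, h2, hc_def]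
          ring
  have step2 : (∫⁻ s in Set.Ioo (0:ℝ) t, c * ENNReal.ofReal ((s+γ) ^ (-p)))
      ≤ c * ENNReal.ofReal I := by
    rw [lintegral_const_mul' _ _ hc_ne]
    refine mul_le_mul_right ?_ _
    calc (∫⁻ s in Set.Ioo (0:ℝ) t, ENNReal.ofReal ((s+γ) ^ (-p)))
        ≤ ∫⁻ s in Set.Ioi (0:ℝ), ENNReal.ofReal ((s+γ) ^ (-p)) :=
          lintegral_mono_set Set.Ioo_subset_Ioi_self
      _ = ∫⁻ u in Set.Ioi γ, ENNReal.ofReal (u ^ (-p)) := shift_lintegral_rpow _ _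
      _ = ENNReal.ofReal (∫ u in Set.Ioi γ, u ^ (-p)) := by
          rw [← ofReal_integral_eq_lintegral_ofReal
            (integrableOn_Ioi_rpow_of_lt (by linarith) hγ)]
          filter_upwards [self_mem_ae_restrict measurableSet_Ioi] with u hu
          exact Real.rpow_nonneg (le_of_lt (lt_trans hγ hu)) _
      _ = ENNReal.ofReal I := by rw [hIval]
  refine le_trans (le_trans step1 step2) (le_of_eq ?_)
  have hG : 0 ≤ G (t+γ) x := hGnonneg _ _
  have hn1 : 0 ≤ C₀ * G (t+γ) x := mul_nonneg hC₀.le hG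
  have hn2 : 0 ≤ C₀ * G (t+γ) x * L ^ (1+η) := mul_nonneg hn1 (Real.rpow_nonneg hL _)
  have hn3 : 0 ≤ C₀ * G (t+γ) x * L ^ (1+η) * c₂ ^ η :=
    mul_nonneg hn2 (Real.rpow_nonneg hc₂.le _)
  rw [hc_def,
    ENNReal.ofReal_rpow_of_nonneg hL h1η.le,
    ENNReal.ofReal_rpow_of_nonneg hc₂.le hη0.le,
    ← ENNReal.ofReal_mul hn1, ← ENNReal.ofReal_mul hn2, ← ENNReal.ofReal_mul hn3]
  congr 1
  ring
end

section
/- Assume the semigroup-type inequality (i), the on-diagonal bound (ii), η > α/(βd) and γ > 0. Then there is a constant C such that for all M > 0, L ≥ 0 and all measurable V, W : (0,∞) × ℝ^d → [0,∞) satisfying V(t,x) ≤ M·G(t+γ,x), W(t,x) ≤ M·G(t+γ,x) and |V(t,x) − W(t,x)| ≤ L·G(t+γ,x) for all t > 0 and x ∈ ℝ^d, one has |(AV)(t,x) − (AW)(t,x)| ≤ C·M^η·L·G(t+γ,x) for all t > 0 and x ∈ ℝ^d. -/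
open MeasureTheory ENNReal
open Set

lemma my_rpow_sub_le {p : ℝ} (hp : 1 ≤ p) {w v : ℝ} (hw : 0 ≤ w) (hwv : w ≤ v) :
    v ^ p - w ^ p ≤ p * v ^ (p - 1) * (v - w) := by
  have hv : 0 ≤ v := hw.trans hwv
  rcases eq_or_lt_of_le hv with h0 | hvpos
  · have hw0 : w = 0 := le_antisymm (hwv.trans h0.symm.le) hw
    simp [← h0, hw0, Real.zero_rpow (by linarith : p ≠ 0)]
  set g : ℝ → ℝ := fun x => p * v ^ (p - 1) * x - x ^ p with hg
  have hcontrpow : Continuous fun x : ℝ => x ^ p :=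
    continuous_iff_continuousAt.mpr fun x =>
      Real.continuousAt_rpow_const x p (Or.inr (by linarith))
  have hmono : MonotoneOn g (Icc 0 v) := by
    apply monotoneOn_of_deriv_nonneg (convex_Icc 0 v)
    · exact ((continuous_const.mul continuous_id).sub hcontrpow).continuousOn
    · intro x hx
      rw [interior_Icc] at hx
      exact (((hasDerivAt_id x).const_mul _).sub
        (Real.hasDerivAt_rpow_const (Or.inl hx.1.ne'))).differentiableAt.differentiableWithinAt
    · intro x hx
      rw [interior_Icc] at hx
      have hd : HasDerivAt g (p * v ^ (p - 1) * 1 - p * x ^ (p - 1)) x :=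
        ((hasDerivAt_id x).const_mul _).sub (Real.hasDerivAt_rpow_const (Or.inl hx.1.ne'))
      rw [hd.deriv]
      have : x ^ (p - 1) ≤ v ^ (p - 1) :=
        Real.rpow_le_rpow hx.1.le hx.2.le (by linarith)
      nlinarith [hx.1.le]
  have hgwv : g w ≤ g v := hmono ⟨hw, hwv⟩ ⟨hv, le_refl v⟩ hwv
  have hid : v ^ (p - 1) * v = v ^ p := by
    rw [← Real.rpow_add_one hvpos.ne' (p - 1)]
    ring_nf
  simp only [hg] at hgwv
  nlinarith

lemma my_rpow_lipschitz {η : ℝ} (hη : 0 ≤ η) {w v K l : ℝ} (hw : 0 ≤ w) (hv : 0 ≤ v)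
    (hvK : v ≤ K) (hl : |v - w| ≤ l) :
    v ^ (1 + η) ≤ w ^ (1 + η) + (1 + η) * K ^ η * l := by
  have hK : 0 ≤ K := hv.trans hvK
  have hl0 : 0 ≤ l := (abs_nonneg _).trans hl
  rcases le_total v w with h | h
  · have h1 : v ^ (1 + η) ≤ w ^ (1 + η) := Real.rpow_le_rpow hv h (by linarith)
    have h2 : 0 ≤ (1 + η) * K ^ η * l := by
      have := Real.rpow_nonneg hK η
      positivity
    linarith
  · have h1 : v ^ (1 + η) - w ^ (1 + η) ≤ (1 + η) * v ^ η * (v - w) := by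
      have := my_rpow_sub_le (p := 1 + η) (by linarith) hw h
      simpa using this
    have h2 : v ^ η ≤ K ^ η := Real.rpow_le_rpow hv hvK hη
    have h3 : v - w ≤ l := (le_abs_self _).trans hl
    have h4 : v ^ η * (v - w) ≤ K ^ η * l :=
      mul_le_mul h2 h3 (sub_nonneg.2 h) (Real.rpow_nonneg hK η)
    nlinarith [mul_le_mul_of_nonneg_left h4 (by linarith : (0:ℝ) ≤ 1 + η)]

lemma my_tail_integral {q γ : ℝ} (hq : 1 < q) (hγ : 0 < γ) (t : ℝ) :
    ∫⁻ s in Set.Ioo (0 : ℝ) t, ENNReal.ofReal ((s + γ) ^ (-q)) ≤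
      ENNReal.ofReal (γ ^ (1 - q) / (q - 1)) := by
  have h1 : ∫⁻ s in Set.Ioo (0 : ℝ) t, ENNReal.ofReal ((s + γ) ^ (-q)) ≤
      ∫⁻ s in Set.Ioi (0 : ℝ), ENNReal.ofReal ((s + γ) ^ (-q)) :=
    lintegral_mono_set Ioo_subset_Ioi_self
  have h2 : ∫⁻ s in Set.Ioi (0 : ℝ), ENNReal.ofReal ((s + γ) ^ (-q)) =
      ∫⁻ u in Set.Ioi γ, ENNReal.ofReal (u ^ (-q)) := by
    have hpre : (fun x : ℝ => x + γ) ⁻¹' Set.Ioi γ = Set.Ioi 0 := by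
      ext x; simp [Set.mem_Ioi]
    rw [← hpre]
    exact (measurePreserving_add_right volume γ).setLIntegral_comp_preimage_emb
      (measurableEmbedding_addRight γ) (fun u => ENNReal.ofReal (u ^ (-q))) (Set.Ioi γ)
  have hint : IntegrableOn (fun u : ℝ => u ^ (-q)) (Set.Ioi γ) :=
    integrableOn_Ioi_rpow_of_lt (by linarith) hγ
  have h3 : ∫⁻ u in Set.Ioi γ, ENNReal.ofReal (u ^ (-q)) =
      ENNReal.ofReal (∫ u in Set.Ioi γ, u ^ (-q)) := by
    rw [ofReal_integral_eq_lintegral_ofReal hint]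
    exact (ae_restrict_iff' measurableSet_Ioi).mpr (ae_of_all _ fun u hu =>
      Real.rpow_nonneg (le_of_lt (hγ.trans hu)) _)
  have h4 : ∫ u in Set.Ioi γ, u ^ (-q) = γ ^ (1 - q) / (q - 1) := by
    rw [integral_Ioi_rpow_of_lt (by linarith) hγ]
    rw [show -q + 1 = 1 - q by ring]
    rw [div_eq_div_iff (by linarith) (by linarith)]
    ring
  rw [h2, h3, h4] at h1
  exact h1

/-- Proposition 5.4. Under the semigroup-type inequality and the
on-diagonal bound, the Duhamel operator is Lipschitz with respect to the weight
`G(·+γ, ·)`: if `V, W ≤ M G(·+γ,·)` and `|V - W| ≤ L G(·+γ,·)`, then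
`|(AV) - (AW)| ≤ C M^η L G(·+γ,·)`. -/
theorem duhamel_comparison_lipschitz
    (d : ℕ) (hd : 1 ≤ d) (α β η γ : ℝ)
    (hα : α ∈ Set.Ioo (0 : ℝ) 2) (hβ : β ∈ Set.Ioo (0 : ℝ) 1)
    (hη : α / (β * d) < η) (hγ : 0 < γ)
    (G : ℝ → EuclideanSpace ℝ (Fin d) → ℝ)
    (hGmeas : Measurable (Function.uncurry G))
    (hGnonneg : ∀ t x, 0 ≤ G t x)
    (C₀ : ℝ) (hC₀ : 0 < C₀)
    (hGsemi : ∀ a b : ℝ, 0 < a → 0 < b → ∀ x : EuclideanSpace ℝ (Fin d),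
      (∫⁻ y, ENNReal.ofReal (G a (x - y)) * ENNReal.ofReal (G b y))
        ≤ ENNReal.ofReal (C₀ * G (a + b) x))
    (c₂ : ℝ) (hc₂ : 0 < c₂)
    (hGdiag : ∀ t : ℝ, 0 < t → ∀ x : EuclideanSpace ℝ (Fin d),
      G t x ≤ c₂ * t ^ (-(β * d) / α)) :
    ∃ C : ℝ, 0 < C ∧
      ∀ M L : ℝ, 0 < M → 0 ≤ L →
        ∀ V W : ℝ → EuclideanSpace ℝ (Fin d) → ℝ,
          Measurable (Function.uncurry V) → (∀ t x, 0 ≤ V t x) →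
          Measurable (Function.uncurry W) → (∀ t x, 0 ≤ W t x) →
          (∀ t : ℝ, 0 < t → ∀ x, V t x ≤ M * G (t + γ) x) →
          (∀ t : ℝ, 0 < t → ∀ x, W t x ≤ M * G (t + γ) x) →
          (∀ t : ℝ, 0 < t → ∀ x, |V t x - W t x| ≤ L * G (t + γ) x) →
          ∀ t : ℝ, 0 < t → ∀ x : EuclideanSpace ℝ (Fin d),
            ((∫⁻ s in Set.Ioo (0 : ℝ) t,
                ∫⁻ y, ENNReal.ofReal (G (t - s) (x - y))
                  * ENNReal.ofReal (V s y) ^ (1 + η))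
              - ∫⁻ s in Set.Ioo (0 : ℝ) t,
                  ∫⁻ y, ENNReal.ofReal (G (t - s) (x - y))
                    * ENNReal.ofReal (W s y) ^ (1 + η))
            ⊔ ((∫⁻ s in Set.Ioo (0 : ℝ) t,
                  ∫⁻ y, ENNReal.ofReal (G (t - s) (x - y))
                    * ENNReal.ofReal (W s y) ^ (1 + η))
                - ∫⁻ s in Set.Ioo (0 : ℝ) t,
                    ∫⁻ y, ENNReal.ofReal (G (t - s) (x - y))
                      * ENNReal.ofReal (V s y) ^ (1 + η))
              ≤ ENNReal.ofReal (C * M ^ η * L * G (t + γ) x) := by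
  obtain ⟨hα0, hα2⟩ := hα
  obtain ⟨hβ0, hβ1⟩ := hβ
  have hd0 : (0 : ℝ) < d := by
    have : (1 : ℝ) ≤ d := by exact_mod_cast hd
    linarith
  have hbd : 0 < β * d := mul_pos hβ0 hd0
  have hη0 : 0 < η := lt_trans (div_pos hα0 hbd) hη
  set q : ℝ := η * (β * d) / α with hqdef
  have hq1 : 1 < q := by
    rw [hqdef, lt_div_iff₀ hα0, one_mul]
    exact (div_lt_iff₀ hbd).mp hη
  have hc₂η : 0 < c₂ ^ η := Real.rpow_pos_of_pos hc₂ η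
  have hγq : 0 < γ ^ (1 - q) := Real.rpow_pos_of_pos hγ _
  refine ⟨(1 + η) * c₂ ^ η * C₀ * (γ ^ (1 - q) / (q - 1)), by
    have h1 : (0:ℝ) < 1 + η := by linarith
    have h2 : (0:ℝ) < q - 1 := by linarith
    exact mul_pos (mul_pos (mul_pos h1 hc₂η) hC₀) (div_pos hγq h2), ?_⟩
  intro M L hM hL V W hVmeas hVnn hWmeas hWnn hVle hWle hVW t ht x
  have hMη : 0 < M ^ η := Real.rpow_pos_of_pos hM η
  -- the one-sided key estimate
  have key : ∀ V' W' : ℝ → EuclideanSpace ℝ (Fin d) → ℝ,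
      Measurable (Function.uncurry W') → (∀ t x, 0 ≤ V' t x) → (∀ t x, 0 ≤ W' t x) →
      (∀ t : ℝ, 0 < t → ∀ x, V' t x ≤ M * G (t + γ) x) →
      (∀ t : ℝ, 0 < t → ∀ x, |V' t x - W' t x| ≤ L * G (t + γ) x) →
      (∫⁻ s in Set.Ioo (0 : ℝ) t,
          ∫⁻ y, ENNReal.ofReal (G (t - s) (x - y)) * ENNReal.ofReal (V' s y) ^ (1 + η))
        ≤ (∫⁻ s in Set.Ioo (0 : ℝ) t,
            ∫⁻ y, ENNReal.ofReal (G (t - s) (x - y)) * ENNReal.ofReal (W' s y) ^ (1 + η))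
          + ENNReal.ofReal ((1 + η) * c₂ ^ η * C₀ * (γ ^ (1 - q) / (q - 1))
              * M ^ η * L * G (t + γ) x) := by
    intro V W hWm hVnn hWnn hVle hVW
    set a : ℝ := (1 + η) * M ^ η * L * c₂ ^ η with ha
    have ha0 : 0 ≤ a := by positivity
    have hWinner_meas : Measurable fun s : ℝ =>
        ∫⁻ y, ENNReal.ofReal (G (t - s) (x - y)) * ENNReal.ofReal (W s y) ^ (1 + η) := by
      apply Measurable.lintegral_prod_right
        (f := fun s y => ENNReal.ofReal (G (t - s) (x - y)) * ENNReal.ofReal (W s y) ^ (1 + η))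
      apply Measurable.mul
      · exact (hGmeas.comp (((measurable_const.sub measurable_fst).prodMk
          (measurable_const.sub measurable_snd)))).ennreal_ofReal
      · exact (hWm.ennreal_ofReal).pow_const _
    have hpt : ∀ s ∈ Set.Ioo (0 : ℝ) t,
        (∫⁻ y, ENNReal.ofReal (G (t - s) (x - y)) * ENNReal.ofReal (V s y) ^ (1 + η))
          ≤ (∫⁻ y, ENNReal.ofReal (G (t - s) (x - y)) * ENNReal.ofReal (W s y) ^ (1 + η))
            + ENNReal.ofReal (a * (s + γ) ^ (-q)) * ENNReal.ofReal (C₀ * G (t + γ) x) := by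
      intro s hs
      have hs0 : 0 < s := hs.1
      have hts : 0 < t - s := sub_pos.2 hs.2
      have hsγ : 0 < s + γ := by linarith
      have hsγq : 0 ≤ (s + γ) ^ (-q) := Real.rpow_nonneg hsγ.le _
      have hy : ∀ y, ENNReal.ofReal (G (t - s) (x - y)) * ENNReal.ofReal (V s y) ^ (1 + η)
          ≤ (fun y => ENNReal.ofReal (G (t - s) (x - y)) * ENNReal.ofReal (W s y) ^ (1 + η)) y
            + (fun y => ENNReal.ofReal (a * (s + γ) ^ (-q)) *
                (ENNReal.ofReal (G (t - s) (x - y)) * ENNReal.ofReal (G (s + γ) y))) y := by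
        intro y
        simp only []
        set g : ℝ := G (s + γ) y with hgdef
        have hg0 : 0 ≤ g := hGnonneg _ _
        have hreal1 : V s y ^ (1 + η) ≤ W s y ^ (1 + η) + (1 + η) * (M * g) ^ η * (L * g) :=
          my_rpow_lipschitz hη0.le (hWnn s y) (hVnn s y) (hVle s hs0 y) (hVW s hs0 y)
        have hgη : g ^ η ≤ c₂ ^ η * (s + γ) ^ (-q) := by
          have h1 : g ≤ c₂ * (s + γ) ^ (-(β * d) / α) := hGdiag (s + γ) hsγ y
          have h2 : g ^ η ≤ (c₂ * (s + γ) ^ (-(β * d) / α)) ^ η :=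
            Real.rpow_le_rpow hg0 h1 hη0.le
          rw [Real.mul_rpow hc₂.le (Real.rpow_nonneg hsγ.le _),
            ← Real.rpow_mul hsγ.le] at h2
          calc g ^ η ≤ c₂ ^ η * (s + γ) ^ (-(β * d) / α * η) := h2
            _ = c₂ ^ η * (s + γ) ^ (-q) := by
                congr 2
                rw [hqdef]
                ring
        have hreal2 : (1 + η) * (M * g) ^ η * (L * g) ≤ a * (s + γ) ^ (-q) * g := by
          rw [Real.mul_rpow hM.le hg0]
          have hfac : (0 : ℝ) ≤ (1 + η) * M ^ η * L * g := by positivity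
          calc (1 + η) * (M ^ η * g ^ η) * (L * g)
              = ((1 + η) * M ^ η * L * g) * g ^ η := by ring
            _ ≤ ((1 + η) * M ^ η * L * g) * (c₂ ^ η * (s + γ) ^ (-q)) :=
                mul_le_mul_of_nonneg_left hgη hfac
            _ = a * (s + γ) ^ (-q) * g := by rw [ha]; ring
        have hreal : V s y ^ (1 + η) ≤ W s y ^ (1 + η) + a * (s + γ) ^ (-q) * g := by
          linarith
        have hb0 : 0 ≤ a * (s + γ) ^ (-q) * g := by positivity
        calc ENNReal.ofReal (G (t - s) (x - y)) * ENNReal.ofReal (V s y) ^ (1 + η)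
            = ENNReal.ofReal (G (t - s) (x - y)) * ENNReal.ofReal (V s y ^ (1 + η)) := by
              rw [ENNReal.ofReal_rpow_of_nonneg (hVnn s y) (by linarith)]
          _ ≤ ENNReal.ofReal (G (t - s) (x - y)) *
              (ENNReal.ofReal (W s y ^ (1 + η)) + ENNReal.ofReal (a * (s + γ) ^ (-q) * g)) := by
              gcongr
              rw [← ENNReal.ofReal_add (Real.rpow_nonneg (hWnn s y) _) hb0]
              exact ENNReal.ofReal_le_ofReal hreal
          _ = ENNReal.ofReal (G (t - s) (x - y)) * ENNReal.ofReal (W s y) ^ (1 + η)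
              + ENNReal.ofReal (a * (s + γ) ^ (-q)) *
                (ENNReal.ofReal (G (t - s) (x - y)) * ENNReal.ofReal g) := by
              rw [mul_add, ENNReal.ofReal_rpow_of_nonneg (hWnn s y) (by linarith),
                ENNReal.ofReal_mul (by positivity)]
              ring
      have hmeas1 : Measurable fun y : EuclideanSpace ℝ (Fin d) =>
          ENNReal.ofReal (G (t - s) (x - y)) * ENNReal.ofReal (W s y) ^ (1 + η) := by
        apply Measurable.mul
        · exact (hGmeas.comp (measurable_const.prodMk
            (measurable_const.sub measurable_id))).ennreal_ofReal
        · exact ((hWm.comp (measurable_prodMk_left)).ennreal_ofReal).pow_const _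
      calc (∫⁻ y, ENNReal.ofReal (G (t - s) (x - y)) * ENNReal.ofReal (V s y) ^ (1 + η))
          ≤ ∫⁻ y, (ENNReal.ofReal (G (t - s) (x - y)) * ENNReal.ofReal (W s y) ^ (1 + η)
              + ENNReal.ofReal (a * (s + γ) ^ (-q)) *
                (ENNReal.ofReal (G (t - s) (x - y)) * ENNReal.ofReal (G (s + γ) y))) :=
            lintegral_mono hy
        _ = (∫⁻ y, ENNReal.ofReal (G (t - s) (x - y)) * ENNReal.ofReal (W s y) ^ (1 + η))
            + ∫⁻ y, ENNReal.ofReal (a * (s + γ) ^ (-q)) *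
                (ENNReal.ofReal (G (t - s) (x - y)) * ENNReal.ofReal (G (s + γ) y)) :=
            lintegral_add_left hmeas1 _
        _ ≤ (∫⁻ y, ENNReal.ofReal (G (t - s) (x - y)) * ENNReal.ofReal (W s y) ^ (1 + η))
            + ENNReal.ofReal (a * (s + γ) ^ (-q)) * ENNReal.ofReal (C₀ * G (t + γ) x) := by
            gcongr
            rw [lintegral_const_mul' _ _ ENNReal.ofReal_ne_top]
            apply mul_le_mul_right
            have := hGsemi (t - s) (s + γ) hts hsγ x
            rwa [show t - s + (s + γ) = t + γ by ring] at this
    calc (∫⁻ s in Set.Ioo (0 : ℝ) t,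
          ∫⁻ y, ENNReal.ofReal (G (t - s) (x - y)) * ENNReal.ofReal (V s y) ^ (1 + η))
        ≤ ∫⁻ s in Set.Ioo (0 : ℝ) t,
            ((∫⁻ y, ENNReal.ofReal (G (t - s) (x - y)) * ENNReal.ofReal (W s y) ^ (1 + η))
              + ENNReal.ofReal (a * (s + γ) ^ (-q)) * ENNReal.ofReal (C₀ * G (t + γ) x)) :=
          lintegral_mono_ae ((ae_restrict_iff' measurableSet_Ioo).mpr (ae_of_all _ hpt))
      _ = (∫⁻ s in Set.Ioo (0 : ℝ) t,
            ∫⁻ y, ENNReal.ofReal (G (t - s) (x - y)) * ENNReal.ofReal (W s y) ^ (1 + η))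
          + ∫⁻ s in Set.Ioo (0 : ℝ) t,
              ENNReal.ofReal (a * (s + γ) ^ (-q)) * ENNReal.ofReal (C₀ * G (t + γ) x) :=
          lintegral_add_left hWinner_meas _
      _ ≤ (∫⁻ s in Set.Ioo (0 : ℝ) t,
            ∫⁻ y, ENNReal.ofReal (G (t - s) (x - y)) * ENNReal.ofReal (W s y) ^ (1 + η))
          + ENNReal.ofReal ((1 + η) * c₂ ^ η * C₀ * (γ ^ (1 - q) / (q - 1))
              * M ^ η * L * G (t + γ) x) := by
          gcongr
          calc ∫⁻ s in Set.Ioo (0 : ℝ) t,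
                ENNReal.ofReal (a * (s + γ) ^ (-q)) * ENNReal.ofReal (C₀ * G (t + γ) x)
              = (∫⁻ s in Set.Ioo (0 : ℝ) t, ENNReal.ofReal (a * (s + γ) ^ (-q)))
                  * ENNReal.ofReal (C₀ * G (t + γ) x) :=
                lintegral_mul_const' _ _ ENNReal.ofReal_ne_top
            _ = (ENNReal.ofReal a * ∫⁻ s in Set.Ioo (0 : ℝ) t, ENNReal.ofReal ((s + γ) ^ (-q)))
                  * ENNReal.ofReal (C₀ * G (t + γ) x) := by
                rw [← lintegral_const_mul' _ _ ENNReal.ofReal_ne_top]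
                congr 1
                apply lintegral_congr
                intro s
                rw [← ENNReal.ofReal_mul ha0]
            _ ≤ (ENNReal.ofReal a * ENNReal.ofReal (γ ^ (1 - q) / (q - 1)))
                  * ENNReal.ofReal (C₀ * G (t + γ) x) := by
                gcongr
                exact my_tail_integral hq1 hγ t
            _ = ENNReal.ofReal ((1 + η) * c₂ ^ η * C₀ * (γ ^ (1 - q) / (q - 1))
                  * M ^ η * L * G (t + γ) x) := by
                rw [← ENNReal.ofReal_mul ha0,
                  ← ENNReal.ofReal_mul (mul_nonneg ha0 (le_of_lt (div_pos hγq (by linarith))))]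
                congr 1
                rw [ha]
                ring
  refine sup_le ?_ ?_
  · rw [tsub_le_iff_right]
    exact (key V W hWmeas hVnn hWnn hVle hVW).trans (le_of_eq (add_comm _ _))
  · rw [tsub_le_iff_right]
    refine ((key W V hVmeas hWnn hVnn hWle ?_).trans (le_of_eq (add_comm _ _)))
    intro s hs y
    rw [abs_sub_comm]
    exact hVW s hs y
end

section
/- Let η > 0, c > 0, K > 0 and 0 < a < 1. Suppose F : (0,∞) → [0,∞] is measurable and satisfies F(t) ≥ K + c·∫₀^t F(s)^{1+η} s^{-a} ds for all t > 0. Then there exists t₀ > 0, depending only on η, c, K and a, such that F(t) = ∞ for all t ≥ t₀. -/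
open MeasureTheory ENNReal

/-- Exponent sequence for the blow-up iteration. -/
noncomputable def blowQ (η a : ℝ) : ℕ → ℝ
  | 0 => 0
  | n + 1 => (1 + η) * blowQ η a n + (1 - a)

/-- Constant sequence for the blow-up iteration. -/
noncomputable def blowC (η c K a : ℝ) : ℕ → ℝ
  | 0 => K
  | n + 1 => c * blowC η c K a n ^ (1 + η) / blowQ η a (n + 1)

lemma blowQ_eq (η a : ℝ) (hη : η ≠ 0) (n : ℕ) :
    blowQ η a n = ((1 - a) / η) * ((1 + η) ^ n - 1) := by
  induction n with
  | zero => simp [blowQ]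
  | succ n ih =>
    rw [blowQ, ih]
    field_simp
    ring

lemma blowQ_nonneg (η a : ℝ) (hη : 0 < η) (ha' : a < 1) (n : ℕ) :
    0 ≤ blowQ η a n := by
  rw [blowQ_eq η a hη.ne']
  have h1 : (1:ℝ) ≤ (1 + η) ^ n := one_le_pow₀ (by linarith)
  have h2 : (0:ℝ) ≤ (1 - a) / η := div_nonneg (by linarith) hη.le
  nlinarith

lemma blowQ_succ_pos (η a : ℝ) (hη : 0 < η) (ha' : a < 1) (n : ℕ) :
    0 < blowQ η a (n + 1) := by
  have := blowQ_nonneg η a hη ha' n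
  rw [blowQ]
  nlinarith

lemma blowQ_le (η a : ℝ) (hη : 0 < η) (ha' : a < 1) (n : ℕ) :
    blowQ η a n ≤ ((1 - a) / η) * (1 + η) ^ n := by
  rw [blowQ_eq η a hη.ne']
  have h2 : (0:ℝ) ≤ (1 - a) / η := div_nonneg (by linarith) hη.le
  nlinarith

lemma blowC_pos (η c K a : ℝ) (hη : 0 < η) (hc : 0 < c) (hK : 0 < K) (ha' : a < 1) (n : ℕ) :
    0 < blowC η c K a n := by
  induction n with
  | zero => simpa [blowC]
  | succ n ih =>
    rw [blowC]
    have h1 := blowQ_succ_pos η a hη ha' n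
    have h2 : (0:ℝ) < blowC η c K a n ^ (1 + η) := Real.rpow_pos_of_pos ih _
    exact div_pos (mul_pos hc h2) h1

set_option maxHeartbeats 1000000 in
/-- integral-inequality blow-up lemma used in the proof of the
Dirichlet blow-up theorem. If `F(t) ≥ K + c ∫₀^t F(s)^{1+η} s^{-a} ds` for all
`t > 0`, with `K, c, η > 0` and `0 < a < 1`, then `F(t) = ∞` for all `t ≥ t₀`,
for some `t₀` depending only on `η, c, K, a`. -/
theorem integral_inequality_blowup
    (η c K a : ℝ)
    (hη : 0 < η) (hc : 0 < c) (hK : 0 < K) (ha : 0 < a) (ha' : a < 1)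
    (F : ℝ → ℝ≥0∞) (hFmeas : Measurable F)
    (hF : ∀ t : ℝ, 0 < t →
      ENNReal.ofReal K
        + ENNReal.ofReal c
          * ∫⁻ s in Set.Ioo (0 : ℝ) t, (F s) ^ (1 + η) * ENNReal.ofReal (s ^ (-a))
        ≤ F t) :
    ∃ t₀ : ℝ, 0 < t₀ ∧ ∀ t : ℝ, t₀ ≤ t → F t = ∞ := by
  -- Main iteration: `F t ≥ C_n t ^ q_n`.
  have main : ∀ n : ℕ, ∀ t : ℝ, 0 < t →
      ENNReal.ofReal (blowC η c K a n * t ^ blowQ η a n) ≤ F t := by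
    intro n
    induction n with
    | zero =>
      intro t ht
      have h0 : blowC η c K a 0 * t ^ blowQ η a 0 = K := by
        simp [blowC, blowQ]
      rw [h0]
      exact le_trans le_self_add (hF t ht)
    | succ n IH =>
      intro t ht
      have hDpos : 0 < blowC η c K a n := blowC_pos η c K a hη hc hK ha' n
      have hqnn : 0 ≤ blowQ η a n := blowQ_nonneg η a hη ha' n
      set D := blowC η c K a n with hD
      set q := blowQ η a n with hq
      set p : ℝ := (1 + η) * q - a with hp_def
      have hp : (-1:ℝ) < p := by
        have : 0 ≤ (1 + η) * q := by nlinarith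
        simp only [hp_def]; linarith
      have hp1 : p + 1 = blowQ η a (n + 1) := by
        rw [blowQ]; simp only [hp_def, ← hq]; ring
      -- pointwise bound on the integrand
      have hpt : ∀ s ∈ Set.Ioo (0:ℝ) t,
          ENNReal.ofReal (D ^ (1 + η) * s ^ p)
            ≤ F s ^ (1 + η) * ENNReal.ofReal (s ^ (-a)) := by
        intro s hs
        have hs0 : 0 < s := hs.1
        have hbase : 0 < D * s ^ q := mul_pos hDpos (Real.rpow_pos_of_pos hs0 q)
        have hsplit : D ^ (1 + η) * s ^ p = (D * s ^ q) ^ (1 + η) * s ^ (-a) := by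
          have e1 : p = q * (1 + η) + (-a) := by simp only [hp_def]; ring
          rw [e1, Real.rpow_add hs0, Real.rpow_mul hs0.le,
            ← mul_assoc, ← Real.mul_rpow hDpos.le (Real.rpow_nonneg hs0.le q)]
        calc ENNReal.ofReal (D ^ (1 + η) * s ^ p)
            = ENNReal.ofReal (D * s ^ q) ^ (1 + η) * ENNReal.ofReal (s ^ (-a)) := by
              rw [hsplit, ENNReal.ofReal_mul (Real.rpow_nonneg hbase.le _),
                ENNReal.ofReal_rpow_of_pos hbase]
          _ ≤ F s ^ (1 + η) * ENNReal.ofReal (s ^ (-a)) :=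
              mul_le_mul_left
                (ENNReal.rpow_le_rpow (IH s hs0) (by linarith : (0:ℝ) ≤ 1 + η)) _
      -- integrability of the comparison function
      have hint : IntegrableOn (fun s : ℝ => D ^ (1 + η) * s ^ p) (Set.Ioo 0 t) :=
        ((intervalIntegral.integrableOn_Ioo_rpow_iff ht).2 hp).const_mul _
      have hnn : 0 ≤ᵐ[Measure.restrict volume (Set.Ioo (0:ℝ) t)]
          fun s => D ^ (1 + η) * s ^ p := by
        filter_upwards [ae_restrict_mem measurableSet_Ioo] with s hs
        have hs0 : 0 < s := hs.1
        exact mul_nonneg (Real.rpow_nonneg hDpos.le _) (Real.rpow_nonneg hs0.le _)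
      have hmeas : Measurable fun s : ℝ => F s ^ (1 + η) * ENNReal.ofReal (s ^ (-a)) := by
        fun_prop
      have hkey : ENNReal.ofReal (∫ s in Set.Ioo (0:ℝ) t, D ^ (1 + η) * s ^ p)
          ≤ ∫⁻ s in Set.Ioo (0:ℝ) t, F s ^ (1 + η) * ENNReal.ofReal (s ^ (-a)) := by
        rw [MeasureTheory.ofReal_integral_eq_lintegral_ofReal hint hnn]
        exact setLIntegral_mono hmeas hpt
      -- value of the comparison integral
      have hval : ∫ s in Set.Ioo (0:ℝ) t, D ^ (1 + η) * s ^ p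
          = D ^ (1 + η) * (t ^ (p + 1) / (p + 1)) := by
        rw [MeasureTheory.integral_const_mul]
        congr 1
        rw [← integral_Ioc_eq_integral_Ioo, ← intervalIntegral.integral_of_le ht.le,
          integral_rpow (Or.inl hp)]
        rw [Real.zero_rpow (by linarith : p + 1 ≠ 0)]
        ring
      have hidentity : blowC η c K a (n + 1) * t ^ blowQ η a (n + 1)
          = c * (D ^ (1 + η) * (t ^ (p + 1) / (p + 1))) := by
        rw [blowC, ← hD, ← hp1]
        ring
      calc ENNReal.ofReal (blowC η c K a (n + 1) * t ^ blowQ η a (n + 1))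
          = ENNReal.ofReal c * ENNReal.ofReal (D ^ (1 + η) * (t ^ (p + 1) / (p + 1))) := by
            rw [hidentity, ENNReal.ofReal_mul hc.le]
        _ ≤ ENNReal.ofReal c
              * ∫⁻ s in Set.Ioo (0:ℝ) t, F s ^ (1 + η) * ENNReal.ofReal (s ^ (-a)) :=
            mul_le_mul_right (hval ▸ hkey) _
        _ ≤ ENNReal.ofReal K + ENNReal.ofReal c
              * ∫⁻ s in Set.Ioo (0:ℝ) t, F s ^ (1 + η) * ENNReal.ofReal (s ^ (-a)) :=
            le_add_self
        _ ≤ F t := hF t ht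
  -- Choice of constants
  have hA1 : (1:ℝ) ≤ 1 + η := by linarith
  have hApos : (0:ℝ) < 1 + η := by linarith
  set lam : ℝ := (1 - a) / η with hlam_def
  have hlam : 0 < lam := div_pos (by linarith) hη
  set rho : ℝ := (1 + η) ^ (2 / η) with hrho_def
  have hrho1 : (1:ℝ) ≤ rho :=
    Real.one_le_rpow hA1 (div_nonneg (by norm_num) hη.le)
  have hrho_pos : (0:ℝ) < rho := lt_of_lt_of_le one_pos hrho1
  have hrho_eta : rho ^ η = (1 + η) ^ (2:ℕ) := by
    rw [hrho_def, ← Real.rpow_mul hApos.le, div_mul_cancel₀ _ hη.ne',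
      ← Real.rpow_natCast (1 + η) 2]
    norm_num
  have hKA : (0:ℝ) < K ^ (1 + η) := Real.rpow_pos_of_pos hK _
  set R : ℝ := max 1 (max (lam * rho / c)
      ((2:ℝ) ^ (1 + η) * rho * (1 - a) / (c * K ^ (1 + η)))) with hR_def
  have hR1 : (1:ℝ) ≤ R := le_max_left _ _
  have hRpos : (0:ℝ) < R := lt_of_lt_of_le one_pos hR1
  set t₀ : ℝ := R ^ (1 - a)⁻¹ with ht₀_def
  have ht₀1 : (1:ℝ) ≤ t₀ :=
    Real.one_le_rpow hR1 (inv_nonneg.2 (by linarith))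
  have ht₀pos : (0:ℝ) < t₀ := lt_of_lt_of_le one_pos ht₀1
  have ht₀pow : t₀ ^ (1 - a) = R := by
    rw [ht₀_def, ← Real.rpow_mul hRpos.le,
      inv_mul_cancel₀ (by linarith : (1:ℝ) - a ≠ 0), Real.rpow_one]
  have hcond1 : lam * rho ≤ c * t₀ ^ (1 - a) := by
    have h : lam * rho / c ≤ R := by
      rw [hR_def]; exact le_trans (le_max_left _ _) (le_max_right _ _)
    rw [div_le_iff₀ hc] at h
    rw [ht₀pow]
    nlinarith
  have hcond2 : (2:ℝ) ^ (1 + η) * rho ≤ c * K ^ (1 + η) * t₀ ^ (1 - a) / (1 - a) := by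
    have h : (2:ℝ) ^ (1 + η) * rho * (1 - a) / (c * K ^ (1 + η)) ≤ R := by
      rw [hR_def]; exact le_trans (le_max_right _ _) (le_max_right _ _)
    rw [div_le_iff₀ (mul_pos hc hKA)] at h
    rw [ht₀pow, le_div_iff₀ (by linarith : (0:ℝ) < 1 - a)]
    nlinarith
  -- The lower-bound sequence at `t₀`.
  have claim : ∀ n : ℕ, (2:ℝ) ^ ((1 + η) ^ (n + 1)) * rho ^ (n + 1)
      ≤ blowC η c K a (n + 1) * t₀ ^ blowQ η a (n + 1) := by
    intro n
    induction n with
    | zero =>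
      have hq1 : blowQ η a (0 + 1) = 1 - a := by
        rw [blowQ]; simp [blowQ]
      have hc1 : blowC η c K a (0 + 1) = c * K ^ (1 + η) / (1 - a) := by
        rw [blowC, hq1]; simp [blowC]
      rw [hq1, hc1]
      simp only [zero_add, pow_one]
      calc (2:ℝ) ^ (1 + η) * rho ≤ c * K ^ (1 + η) * t₀ ^ (1 - a) / (1 - a) := hcond2
        _ = c * K ^ (1 + η) / (1 - a) * t₀ ^ (1 - a) := by ring
    | succ n IH =>
      have hXpos : 0 < blowC η c K a (n + 1) := blowC_pos η c K a hη hc hK ha' _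
      have hqqnn : 0 ≤ blowQ η a (n + 1) := blowQ_nonneg η a hη ha' _
      have hQ2pos : 0 < blowQ η a (n + 1 + 1) := blowQ_succ_pos η a hη ha' _
      have hQ2le : blowQ η a (n + 1 + 1) ≤ lam * (1 + η) ^ (n + 1 + 1) := by
        have := blowQ_le η a hη ha' (n + 1 + 1)
        rwa [← hlam_def] at this
      set X := blowC η c K a (n + 1) with hX
      set qq := blowQ η a (n + 1) with hqq_def
      set Q2 := blowQ η a (n + 1 + 1) with hQ2_def
      have e2 : t₀ ^ Q2 = t₀ ^ (qq * (1 + η)) * t₀ ^ (1 - a) := by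
        have e : Q2 = qq * (1 + η) + (1 - a) := by
          rw [hQ2_def, blowQ, ← hqq_def]; ring
        rw [e, Real.rpow_add ht₀pos]
      have e1 : (X * t₀ ^ qq) ^ (1 + η) = X ^ (1 + η) * t₀ ^ (qq * (1 + η)) := by
        rw [Real.mul_rpow hXpos.le (Real.rpow_nonneg ht₀pos.le _),
          ← Real.rpow_mul ht₀pos.le]
      have hidentity : blowC η c K a (n + 1 + 1) * t₀ ^ Q2
          = (c * t₀ ^ (1 - a) / Q2) * (X * t₀ ^ qq) ^ (1 + η) := by
        have e3 : blowC η c K a (n + 1 + 1) = c * X ^ (1 + η) / Q2 := by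
          rw [blowC, ← hX, ← hQ2_def]
        rw [e3, e2, e1]
        ring
      have hexp : ((2:ℝ) ^ ((1 + η) ^ (n + 1)) * rho ^ (n + 1)) ^ (1 + η)
          = (2:ℝ) ^ ((1 + η) ^ (n + 1 + 1)) * rho ^ (((n + 1 : ℕ) : ℝ) * (1 + η)) := by
        rw [Real.mul_rpow (Real.rpow_nonneg (by norm_num) _) (pow_nonneg hrho_pos.le _),
          ← Real.rpow_mul (by norm_num : (0:ℝ) ≤ 2), ← pow_succ,
          ← Real.rpow_natCast rho (n + 1), ← Real.rpow_mul hrho_pos.le]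
      have hsplitrho : rho ^ (((n + 1 : ℕ) : ℝ) * (1 + η))
          = rho ^ (n + 1) * (1 + η) ^ (2 * (n + 1)) := by
        have e : ((n + 1 : ℕ) : ℝ) * (1 + η)
            = ((n + 1 : ℕ) : ℝ) + η * ((n + 1 : ℕ) : ℝ) := by ring
        rw [e, Real.rpow_add hrho_pos, Real.rpow_natCast, Real.rpow_mul hrho_pos.le,
          Real.rpow_natCast, hrho_eta, ← pow_mul]
      have hcore : rho * Q2
          ≤ c * t₀ ^ (1 - a) * ((1 + η) ^ (n + 1 + 1) * (1 + η) ^ n) := by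
        have h1 : (1:ℝ) ≤ (1 + η) ^ n := one_le_pow₀ hA1
        have h2 : (0:ℝ) < (1 + η) ^ (n + 1 + 1) := pow_pos hApos _
        have hx : (0:ℝ) < c * t₀ ^ (1 - a) := mul_pos hc (Real.rpow_pos_of_pos ht₀pos _)
        calc rho * Q2 ≤ rho * (lam * (1 + η) ^ (n + 1 + 1)) := by nlinarith
          _ = (lam * rho) * (1 + η) ^ (n + 1 + 1) := by ring
          _ ≤ (c * t₀ ^ (1 - a)) * (1 + η) ^ (n + 1 + 1) :=
              mul_le_mul_of_nonneg_right hcond1 h2.le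
          _ ≤ c * t₀ ^ (1 - a) * ((1 + η) ^ (n + 1 + 1) * (1 + η) ^ n) := by
              nlinarith [mul_le_mul_of_nonneg_left h1 (mul_pos hx h2).le]
      have hpowe : (1 + η) ^ (2 * (n + 1)) = (1 + η) ^ (n + 1 + 1) * (1 + η) ^ n := by
        rw [← pow_add]
        congr 1
        omega
      have hfinal : rho ^ (n + 1 + 1) ≤ (c * t₀ ^ (1 - a) / Q2)
          * rho ^ (((n + 1 : ℕ) : ℝ) * (1 + η)) := by
        rw [hsplitrho]
        have hr1 : (0:ℝ) ≤ rho ^ (n + 1) := pow_nonneg hrho_pos.le _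
        have hmid : rho ≤ (c * t₀ ^ (1 - a) / Q2) * (1 + η) ^ (2 * (n + 1)) := by
          rw [div_mul_eq_mul_div, le_div_iff₀ hQ2pos, hpowe]
          exact hcore
        calc rho ^ (n + 1 + 1) = rho ^ (n + 1) * rho := pow_succ rho (n + 1)
          _ ≤ rho ^ (n + 1) * ((c * t₀ ^ (1 - a) / Q2) * (1 + η) ^ (2 * (n + 1))) :=
              mul_le_mul_of_nonneg_left hmid hr1
          _ = (c * t₀ ^ (1 - a) / Q2) * (rho ^ (n + 1) * (1 + η) ^ (2 * (n + 1))) := by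
              ring
      calc (2:ℝ) ^ ((1 + η) ^ (n + 1 + 1)) * rho ^ (n + 1 + 1)
          ≤ (2:ℝ) ^ ((1 + η) ^ (n + 1 + 1))
              * ((c * t₀ ^ (1 - a) / Q2) * rho ^ (((n + 1 : ℕ) : ℝ) * (1 + η))) :=
            mul_le_mul_of_nonneg_left hfinal (Real.rpow_nonneg (by norm_num) _)
        _ = (c * t₀ ^ (1 - a) / Q2)
              * ((2:ℝ) ^ ((1 + η) ^ (n + 1 + 1)) * rho ^ (((n + 1 : ℕ) : ℝ) * (1 + η))) := by
            ring
        _ = (c * t₀ ^ (1 - a) / Q2)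
              * (((2:ℝ) ^ ((1 + η) ^ (n + 1)) * rho ^ (n + 1)) ^ (1 + η)) := by
            rw [hexp]
        _ ≤ (c * t₀ ^ (1 - a) / Q2) * ((X * t₀ ^ qq) ^ (1 + η)) := by
            have hb : (0:ℝ) ≤ (2:ℝ) ^ ((1 + η) ^ (n + 1)) * rho ^ (n + 1) :=
              mul_nonneg (Real.rpow_nonneg (by norm_num) _) (pow_nonneg hrho_pos.le _)
            exact mul_le_mul_of_nonneg_left
              (Real.rpow_le_rpow hb IH (by linarith))
              (div_nonneg (mul_pos hc (Real.rpow_pos_of_pos ht₀pos _)).le hQ2pos.le)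
        _ = blowC η c K a (n + 1 + 1) * t₀ ^ Q2 := hidentity.symm
  -- Conclusion: `F t = ∞` for `t ≥ t₀`.
  refine ⟨t₀, ht₀pos, fun t htt => ?_⟩
  by_contra hne
  have hFt : F t = ENNReal.ofReal (F t).toReal := (ENNReal.ofReal_toReal hne).symm
  set M := (F t).toReal with hM_def
  have hM0 : 0 ≤ M := ENNReal.toReal_nonneg
  have htpos : 0 < t := lt_of_lt_of_le ht₀pos htt
  have hlow : ∀ n : ℕ, 2 * ((2:ℝ) ^ η) ^ (n + 1) ≤ M := by
    intro n
    have h1 := main (n + 1) t htpos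
    have h2 : (2:ℝ) ^ ((1 + η) ^ (n + 1)) * rho ^ (n + 1)
        ≤ blowC η c K a (n + 1) * t ^ blowQ η a (n + 1) := by
      refine le_trans (claim n) ?_
      have hmono : t₀ ^ blowQ η a (n + 1) ≤ t ^ blowQ η a (n + 1) :=
        Real.rpow_le_rpow ht₀pos.le htt (blowQ_nonneg η a hη ha' _)
      exact mul_le_mul_of_nonneg_left hmono (blowC_pos η c K a hη hc hK ha' _).le
    have h3 : 2 * ((2:ℝ) ^ η) ^ (n + 1)
        ≤ (2:ℝ) ^ ((1 + η) ^ (n + 1)) * rho ^ (n + 1) := by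
      have hb : (1:ℝ) + ((n + 1 : ℕ) : ℝ) * η ≤ (1 + η) ^ (n + 1) := by
        have := one_add_mul_le_pow (by linarith : (-2:ℝ) ≤ η) (n + 1)
        exact_mod_cast this
      have h2exp : (2:ℝ) ^ ((1:ℝ) + ((n + 1 : ℕ) : ℝ) * η) ≤ 2 ^ ((1 + η) ^ (n + 1)) :=
        Real.rpow_le_rpow_of_exponent_le one_le_two hb
      have hsplit2 : (2:ℝ) ^ ((1:ℝ) + ((n + 1 : ℕ) : ℝ) * η)
          = 2 * ((2:ℝ) ^ η) ^ (n + 1) := by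
        rw [Real.rpow_add two_pos, Real.rpow_one, mul_comm (((n + 1 : ℕ) : ℝ)) η,
          Real.rpow_mul (by norm_num : (0:ℝ) ≤ 2), Real.rpow_natCast]
      have hrr : (1:ℝ) ≤ rho ^ (n + 1) := one_le_pow₀ hrho1
      have h2p : (0:ℝ) < (2:ℝ) ^ ((1 + η) ^ (n + 1)) := Real.rpow_pos_of_pos two_pos _
      nlinarith
    have h4 := le_trans (ENNReal.ofReal_le_ofReal (le_trans h3 h2)) h1
    rw [hFt] at h4
    exact (ENNReal.ofReal_le_ofReal_iff hM0).1 h4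
  have hone : (1:ℝ) < (2:ℝ) ^ η :=
    (Real.one_lt_rpow_iff_of_pos two_pos).2 (Or.inl ⟨one_lt_two, hη⟩)
  have htend := tendsto_pow_atTop_atTop_of_one_lt hone
  obtain ⟨N, hN⟩ := Filter.eventually_atTop.1 (htend.eventually_ge_atTop (M + 1))
  have hNN := hN (N + 1) (Nat.le_succ N)
  have hlowN := hlow N
  linarith
end
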